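/- For each i ∈ {1,…,n−1}, every directed path in G that starts at g_{i−1}, ends at a vertex of C ∪ R⁻¹(E(G)), and all of whose internal vertices lie outside C ∪ R⁻¹(E(G)), ends at g_i, and its sequence of edges is either (g_{i−1},a_i),(a_i,b_i),(b_i,e_i),(e_i,d_i),(d_i,g_i) or (g_{i−1},a_i),(a_i,c_i),(c_i,f_i),(f_i,d_i),(d_i,g_i). -/

import Mathlib

namespace PhutballQBF

/-- A literal: a variable `xₗ` (`pos l`) or its negation `¬xₗ` (`neg l`). -/
inductive Lit where
  | pos (l : ℕ)
  | neg (l : ℕ)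
deriving DecidableEq

/-- The index of the variable occurring in a literal. -/
def Lit.var : Lit → ℕ
  | .pos l => l
  | .neg l => l

/-- Evaluation of a literal under a Boolean assignment. -/
def Lit.eval (σ : ℕ → Bool) : Lit → Bool
  | .pos l => σ l
  | .neg l => !(σ l)

/-- Well-formedness of the 3CNF `F = F₁ ∧ ⋯ ∧ F_m`: the literal `l_{i,j}` (for
`1 ≤ i ≤ m`, `1 ≤ j ≤ 3`) mentions one of the variables `x₁, …, xₙ`. -/
def LitWF (n m : ℕ) (lit : ℕ → ℕ → Lit) : Prop :=
  ∀ i j, 1 ≤ i → i ≤ m → 1 ≤ j → j ≤ 3 → 1 ≤ (lit i j).var ∧ (lit i j).var ≤ n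

/-- The clause `Fᵢ = (l_{i,1} ∨ l_{i,2} ∨ l_{i,3})` evaluates to true under `σ`. -/
def ClauseTrue (lit : ℕ → ℕ → Lit) (i : ℕ) (σ : ℕ → Bool) : Prop :=
  ∃ j, 1 ≤ j ∧ j ≤ 3 ∧ (lit i j).eval σ = true

/-- The 3CNF formula `F = F₁ ∧ ⋯ ∧ F_m` evaluates to true under `σ`. -/
def FTrue (lit : ℕ → ℕ → Lit) (m : ℕ) (σ : ℕ → Bool) : Prop :=
  ∀ i, 1 ≤ i → i ≤ m → ClauseTrue lit i σ

/-- `QAux P i k σ`: the quantified statement with `k` variables `x_i, …, x_{i+k-1}`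
still to be quantified (existentially when the index is odd, universally when even),
the remaining variables having the values recorded in `σ`. -/
def QAux (P : (ℕ → Bool) → Prop) : ℕ → ℕ → (ℕ → Bool) → Prop
  | _, 0, σ => P σ
  | i, k + 1, σ =>
      if i % 2 = 1 then ∃ b, QAux P (i + 1) k (Function.update σ i b)
      else ∀ b, QAux P (i + 1) k (Function.update σ i b)

/-- Truth of the restricted quantified Boolean formula
`Q = ∃x₁ ∀x₂ ∃x₃ ⋯ ∀xₙ F(x₁, …, xₙ)`. -/
def QTrue (n m : ℕ) (lit : ℕ → ℕ → Lit) : Prop :=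
  QAux (FTrue lit m) 1 n (fun _ => false)

/-- The vertices of the graph `G` built from `Q` (with natural-number indices;
`g 0` is the extra vertex `g₀`). -/
inductive Vtx where
  | a (i : ℕ) | b (i : ℕ) | c (i : ℕ) | d (i : ℕ) | e (i : ℕ) | f (i : ℕ) | g (i : ℕ)
  | x (i : ℕ) | y (i : ℕ) | z (i : ℕ) | w (i : ℕ) (j : ℕ)
deriving DecidableEq

/-- A directed edge. -/
abbrev Edge := Vtx × Vtx

/-- The edge set `E(G)` of the graph `G` constructed from `Q` (with `n` variables and
`m` clauses): the variable components `G(xᵢ)`, the connecting edges `(gᵢ, aᵢ₊₁)` for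
`i = 0, …, n-1`, the edge `(gₙ, x₁)`, and the formula component `G(F)`. -/
def EG (n m : ℕ) : Set Edge :=
  { p | (∃ i, 1 ≤ i ∧ i ≤ n ∧
          (p = (Vtx.a i, Vtx.b i) ∨ p = (Vtx.a i, Vtx.c i) ∨ p = (Vtx.b i, Vtx.e i) ∨
           p = (Vtx.c i, Vtx.f i) ∨ p = (Vtx.e i, Vtx.d i) ∨ p = (Vtx.f i, Vtx.d i) ∨
           p = (Vtx.d i, Vtx.g i))) ∨
        (∃ i, i ≤ n - 1 ∧ p = (Vtx.g i, Vtx.a (i + 1))) ∨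
        p = (Vtx.g n, Vtx.x 1) ∨
        (∃ i, 1 ≤ i ∧ i ≤ m ∧
          (p = (Vtx.x i, Vtx.y i) ∨ p = (Vtx.y i, Vtx.z i) ∨ p = (Vtx.z i, Vtx.w i 1) ∨
           p = (Vtx.w i 1, Vtx.w i 2) ∨ p = (Vtx.w i 2, Vtx.w i 3))) ∨
        (∃ i, 1 ≤ i ∧ i ≤ m - 1 ∧ p = (Vtx.x i, Vtx.x (i + 1))) }

/-- The set `C = {g₀, g₁, …, g_{n-1}} ∪ {z₁, …, z_m}`. -/
def Cset (n m : ℕ) : Set Vtx :=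
  { v | (∃ i, i ≤ n - 1 ∧ v = Vtx.g i) ∨ (∃ i, 1 ≤ i ∧ i ≤ m ∧ v = Vtx.z i) }

/-- The relation `R ⊆ V(G) × E(G)`: `(w_{i,j}, (bₗ, eₗ)) ∈ R` iff `l_{i,j} = xₗ`, and
`(w_{i,j}, (cₗ, fₗ)) ∈ R` iff `l_{i,j} = ¬xₗ`. -/
def Rrel (lit : ℕ → ℕ → Lit) (m : ℕ) : Set (Vtx × Edge) :=
  { p | ∃ i j, 1 ≤ i ∧ i ≤ m ∧ 1 ≤ j ∧ j ≤ 3 ∧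
        ((∃ l, lit i j = Lit.pos l ∧ p = (Vtx.w i j, (Vtx.b l, Vtx.e l))) ∨
         (∃ l, lit i j = Lit.neg l ∧ p = (Vtx.w i j, (Vtx.c l, Vtx.f l)))) }

/-- `Rinv R E = R⁻¹(E)`: the vertices pointing some edge of `E`. -/
def Rinv (R : Set (Vtx × Edge)) (E : Set Edge) : Set Vtx :=
  { v | ∃ e ∈ E, (v, e) ∈ R }

/-- The set of (directed) edges traversed by a path given as its list of vertices. -/
def pathEdges (p : List Vtx) : Set Edge := { e | e ∈ p.zip p.tail }

/-- A legal move of the graph game from active vertex `u ∈ C` with current edge set `E`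
along the directed path `p` (a list of at least two pairwise distinct vertices whose
consecutive pairs are edges of `E`), ending at a vertex `v ∈ C ∪ R⁻¹(E)`, with all
internal vertices of `p` outside `C ∪ R⁻¹(E)`; the resulting edge set `E'` is obtained
by deleting the edges of `p` from `E`. -/
def LegalMoveVia (C : Set Vtx) (R : Set (Vtx × Edge))
    (u : Vtx) (E : Set Edge) (v : Vtx) (E' : Set Edge) (p : List Vtx) : Prop :=
  u ∈ C ∧ v ∈ C ∪ Rinv R E ∧
  2 ≤ p.length ∧ p.Nodup ∧
  p.head? = some u ∧ p.getLast? = some v ∧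
  List.Chain' (fun a b => (a, b) ∈ E) p ∧
  (∀ w ∈ (p.drop 1).dropLast, w ∉ C ∪ Rinv R E) ∧
  E' = E \ pathEdges p

/-- A legal move from `(u, E)` to `(v, E')` (along some path). -/
def LegalMove (C : Set Vtx) (R : Set (Vtx × Edge))
    (u : Vtx) (E : Set Edge) (v : Vtx) (E' : Set Edge) : Prop :=
  ∃ p, LegalMoveVia C R u E v E' p

/-- `MoverWins C R true u E` says that the player to move at the position with active
vertex `u` and current edge set `E` has a winning strategy; `MoverWins C R false u E`
says that the player to move loses whatever he does (in particular, if he has no legal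
move he loses immediately; a move to a vertex of `R⁻¹(E)` wins the game for the mover). -/
inductive MoverWins (C : Set Vtx) (R : Set (Vtx × Edge)) : Bool → Vtx → Set Edge → Prop
  | winsNow {u E v E'} : LegalMove C R u E v E' → v ∈ Rinv R E →
      MoverWins C R true u E
  | winsLater {u E v E'} : LegalMove C R u E v E' → MoverWins C R false v E' →
      MoverWins C R true u E
  | loses {u E} :
      (∀ v E', LegalMove C R u E v E' → v ∉ Rinv R E) →
      (∀ v E', LegalMove C R u E v E' → MoverWins C R true v E') →
      MoverWins C R false u E

/-- The two players of the graph game. -/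
inductive Player where
  | ex | fa
deriving DecidableEq

/-- The opponent of a player. -/
def Player.other : Player → Player
  | .ex => .fa
  | .fa => .ex

/-- A (maximal) play of the graph game on `(G, C, s, R)` starting from active vertex `s`
and edge set `E0`, with the ∃-player moving first.  `act k` and `edg k` are the active
vertex and edge set after `k` moves, `turn k` is the player who makes the `(k+1)`-st
move, and `len` is the total number of moves.  The play stops either because its last
move reached a vertex of `R⁻¹(E)` (the mover wins) or because the player to move has no
legal move (he loses); before that, no move may end in `R⁻¹(E)` without stopping. -/
structure Play (C : Set Vtx) (R : Set (Vtx × Edge)) (s : Vtx) (E0 : Set Edge) where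
  len : ℕ
  act : ℕ → Vtx
  edg : ℕ → Set Edge
  turn : ℕ → Player
  init_act : act 0 = s
  init_edg : edg 0 = E0
  init_turn : turn 0 = Player.ex
  turn_alt : ∀ k, turn (k + 1) = (turn k).other
  step : ∀ k, k < len → LegalMove C R (act k) (edg k) (act (k + 1)) (edg (k + 1))
  not_over : ∀ k, k + 1 < len → act (k + 1) ∉ Rinv R (edg k)
  maximal : (0 < len ∧ act len ∈ Rinv R (edg (len - 1))) ∨
            (∀ v E', ¬ LegalMove C R (act len) (edg len) v E')

/-! The only edge leaving `g_{i-1}` enters `aᵢ`, and inside `G(xᵢ)` every vertex but `aᵢ` has a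
single successor, so a path from `g_{i-1}` is forced along `aᵢbᵢeᵢdᵢ` or `aᵢcᵢfᵢdᵢ`. None of these
vertices is in `C ∪ R⁻¹(E(G))`, since `R` relates only the vertices `w_{k,j}`, so the path cannot
stop before reaching `gᵢ`, and it must stop there because `gᵢ ∈ C` for `i ≤ n - 1`. -/

section FirstHitPath

variable {α : Type*} {r : α → α → Prop} {S : Set α}

inductive IsFirstHitPath (r : α → α → Prop) (S : Set α) : List α → Prop
  | pair {u w : α} : r u w → w ∈ S → IsFirstHitPath r S [u, w]
  | cons {u w : α} {q : List α} : r u w → w ∉ S → IsFirstHitPath r S (w :: q) →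
      IsFirstHitPath r S (u :: w :: q)

theorem isFirstHitPath_of_isChain :
    ∀ {p : List α}, 2 ≤ p.length → p.IsChain r → (∀ v ∈ p.getLast?, v ∈ S) →
      (∀ x ∈ (p.drop 1).dropLast, x ∉ S) → IsFirstHitPath r S p
  | [u, w], _, hchain, hlast, _ =>
    .pair (List.isChain_pair.mp hchain) (hlast w (by simp))
  | u :: w :: y :: q, _, hchain, hlast, hint => by
    rw [List.isChain_cons_cons] at hchain
    refine .cons hchain.1 (hint w (by simp)) (isFirstHitPath_of_isChain (by simp) hchain.2
      (fun v hv => hlast v (by simpa using hv)) fun x hx => hint x ?_)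
    simp only [List.drop_one, List.tail_cons, List.dropLast_cons_cons] at hx ⊢
    exact List.mem_cons_of_mem w hx

theorem IsFirstHitPath.exists_eq_cons {u : α} {p : List α}
    (h : IsFirstHitPath r S (u :: p)) : ∃ w q, p = w :: q ∧ r u w := by
  cases h with
  | pair huw _ => exact ⟨_, _, rfl, huw⟩
  | cons huw _ _ => exact ⟨_, _, rfl, huw⟩

theorem IsFirstHitPath.of_cons {u w : α} {q : List α}
    (h : IsFirstHitPath r S (u :: w :: q)) (hw : w ∉ S) : IsFirstHitPath r S (w :: q) := by
  cases h with
  | pair _ hwS => exact absurd hwS hw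
  | cons _ _ h => exact h

theorem IsFirstHitPath.eq_nil_of_cons {u w : α} {q : List α}
    (h : IsFirstHitPath r S (u :: w :: q)) (hw : w ∈ S) : q = [] := by
  cases h with
  | pair => rfl
  | cons _ hwS => exact absurd hw hwS

theorem IsFirstHitPath.tail_of_forall_rel_eq {u w₀ : α} {p : List α}
    (h : IsFirstHitPath r S (u :: p)) (hsucc : ∀ w, r u w → w = w₀) (hw₀ : w₀ ∉ S) :
    ∃ q, p = w₀ :: q ∧ IsFirstHitPath r S (w₀ :: q) := by
  obtain ⟨w, q, rfl, huw⟩ := h.exists_eq_cons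
  obtain rfl := hsucc w huw
  exact ⟨q, rfl, h.of_cons hw₀⟩

theorem IsFirstHitPath.eq_singleton_of_forall_rel_eq {u w₀ : α} {p : List α}
    (h : IsFirstHitPath r S (u :: p)) (hsucc : ∀ w, r u w → w = w₀) (hw₀ : w₀ ∈ S) :
    p = [w₀] := by
  obtain ⟨w, q, rfl, huw⟩ := h.exists_eq_cons
  obtain rfl := hsucc w huw
  rw [h.eq_nil_of_cons hw₀]

end FirstHitPath

abbrev stopSet (n m : ℕ) (lit : ℕ → ℕ → Lit) : Set Vtx :=
  Cset n m ∪ Rinv (Rrel lit m) (EG n m)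

abbrev AdjG (n m : ℕ) (u v : Vtx) : Prop := (u, v) ∈ EG n m

section VariableComponent

variable {n m : ℕ} {lit : ℕ → ℕ → Lit} {i : ℕ} {u : Vtx}

theorem eq_a_of_adjG_g (hi : i ≠ n) (h : AdjG n m (.g i) u) : u = .a (i + 1) := by
  simp [AdjG, EG] at h; grind

theorem eq_b_or_eq_c_of_adjG_a (h : AdjG n m (.a i) u) : u = .b i ∨ u = .c i := by
  simp [AdjG, EG] at h; grind

theorem eq_e_of_adjG_b (h : AdjG n m (.b i) u) : u = .e i := by
  simp [AdjG, EG] at h; grind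

theorem eq_f_of_adjG_c (h : AdjG n m (.c i) u) : u = .f i := by
  simp [AdjG, EG] at h; grind

theorem eq_d_of_adjG_e (h : AdjG n m (.e i) u) : u = .d i := by
  simp [AdjG, EG] at h; grind

theorem eq_d_of_adjG_f (h : AdjG n m (.f i) u) : u = .d i := by
  simp [AdjG, EG] at h; grind

theorem eq_g_of_adjG_d (h : AdjG n m (.d i) u) : u = .g i := by
  simp [AdjG, EG] at h; grind

theorem g_mem_stopSet (hi : i ≤ n - 1) : Vtx.g i ∈ stopSet n m lit :=
  Or.inl (Or.inl ⟨i, hi, rfl⟩)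

variable {p : List Vtx}

theorem tail_eq_of_isFirstHitPath_d (hi : i ≤ n - 1)
    (h : IsFirstHitPath (AdjG n m) (stopSet n m lit) (.d i :: p)) : p = [.g i] :=
  h.eq_singleton_of_forall_rel_eq (fun _ => eq_g_of_adjG_d) (g_mem_stopSet hi)

theorem tail_eq_of_isFirstHitPath_b (hi : i ≤ n - 1)
    (h : IsFirstHitPath (AdjG n m) (stopSet n m lit) (.b i :: p)) :
    p = [.e i, .d i, .g i] := by
  obtain ⟨p, rfl, he⟩ := h.tail_of_forall_rel_eq (fun _ => eq_e_of_adjG_b)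
    (by simp [Cset, Rinv, Rrel])
  obtain ⟨p, rfl, hd⟩ := he.tail_of_forall_rel_eq (fun _ => eq_d_of_adjG_e)
    (by simp [Cset, Rinv, Rrel])
  rw [tail_eq_of_isFirstHitPath_d hi hd]

theorem tail_eq_of_isFirstHitPath_c (hi : i ≤ n - 1)
    (h : IsFirstHitPath (AdjG n m) (stopSet n m lit) (.c i :: p)) :
    p = [.f i, .d i, .g i] := by
  obtain ⟨p, rfl, hf⟩ := h.tail_of_forall_rel_eq (fun _ => eq_f_of_adjG_c)
    (by simp [Cset, Rinv, Rrel])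
  obtain ⟨p, rfl, hd⟩ := hf.tail_of_forall_rel_eq (fun _ => eq_d_of_adjG_f)
    (by simp [Cset, Rinv, Rrel])
  rw [tail_eq_of_isFirstHitPath_d hi hd]

theorem tail_eq_of_isFirstHitPath_a (hi : i ≤ n - 1)
    (h : IsFirstHitPath (AdjG n m) (stopSet n m lit) (.a i :: p)) :
    p = [.b i, .e i, .d i, .g i] ∨ p = [.c i, .f i, .d i, .g i] := by
  obtain ⟨w, q, rfl, hw⟩ := h.exists_eq_cons
  rcases eq_b_or_eq_c_of_adjG_a hw with rfl | rfl
  · left; rw [tail_eq_of_isFirstHitPath_b hi (h.of_cons (by simp [Cset, Rinv, Rrel]))]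
  · right; rw [tail_eq_of_isFirstHitPath_c hi (h.of_cons (by simp [Cset, Rinv, Rrel]))]

end VariableComponent

theorem path_through_variable_component_general
    (n m : ℕ) (lit : ℕ → ℕ → Lit)
    (i : ℕ) (hi1 : 1 ≤ i) (hi2 : i ≤ n - 1)
    (p : List Vtx) (v : Vtx) (hplen : 2 ≤ p.length)
    (hhead : p.head? = some (Vtx.g (i - 1)))
    (hlast : p.getLast? = some v)
    (hv : v ∈ Cset n m ∪ Rinv (Rrel lit m) (EG n m))
    (hchain : List.Chain' (fun a b => (a, b) ∈ EG n m) p)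
    (hint : ∀ u ∈ (p.drop 1).dropLast, u ∉ Cset n m ∪ Rinv (Rrel lit m) (EG n m)) :
    v = Vtx.g i ∧
    (p = [Vtx.g (i - 1), Vtx.a i, Vtx.b i, Vtx.e i, Vtx.d i, Vtx.g i] ∨
     p = [Vtx.g (i - 1), Vtx.a i, Vtx.c i, Vtx.f i, Vtx.d i, Vtx.g i]) := by
  have hp : IsFirstHitPath (AdjG n m) (stopSet n m lit) p :=
    isFirstHitPath_of_isChain hplen hchain (by simpa [hlast] using hv) hint
  obtain ⟨p, rfl⟩ : ∃ q, p = .g (i - 1) :: q := ⟨_, List.eq_cons_of_mem_head? hhead⟩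
  have hga : ∀ w, AdjG n m (.g (i - 1)) w → w = .a i := fun w hw => by
    simpa [Nat.sub_add_cancel hi1] using eq_a_of_adjG_g (by omega) hw
  obtain ⟨p, rfl, ha⟩ := hp.tail_of_forall_rel_eq hga (by simp [Cset, Rinv, Rrel])
  rcases tail_eq_of_isFirstHitPath_a hi2 ha with rfl | rfl
  · exact ⟨by simpa using hlast.symm, .inl rfl⟩
  · exact ⟨by simpa using hlast.symm, .inr rfl⟩

/-- **Fact 1.** For each `i ∈ {1, …, n-1}`, every directed path in `G`
(given by its list of vertices `p`, with at least one edge and pairwise distinct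
vertices) that starts at `g_{i-1}`, ends at a vertex `v ∈ C ∪ R⁻¹(E(G))`, and all of
whose internal vertices lie outside `C ∪ R⁻¹(E(G))`, ends at `gᵢ`, and its sequence of
edges is either `(g_{i-1},aᵢ),(aᵢ,bᵢ),(bᵢ,eᵢ),(eᵢ,dᵢ),(dᵢ,gᵢ)` or
`(g_{i-1},aᵢ),(aᵢ,cᵢ),(cᵢ,fᵢ),(fᵢ,dᵢ),(dᵢ,gᵢ)`. -/
theorem path_through_variable_component
    (n m : ℕ) (hn : Even n) (hn2 : 2 ≤ n) (hm : 1 ≤ m)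
    (lit : ℕ → ℕ → Lit) (hwf : LitWF n m lit)
    (i : ℕ) (hi1 : 1 ≤ i) (hi2 : i ≤ n - 1)
    (p : List Vtx) (v : Vtx)
    (hplen : 2 ≤ p.length) (hnd : p.Nodup)
    (hhead : p.head? = some (Vtx.g (i - 1)))
    (hlast : p.getLast? = some v)
    (hv : v ∈ Cset n m ∪ Rinv (Rrel lit m) (EG n m))
    (hchain : List.Chain' (fun a b => (a, b) ∈ EG n m) p)
    (hint : ∀ u ∈ (p.drop 1).dropLast, u ∉ Cset n m ∪ Rinv (Rrel lit m) (EG n m)) :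
    v = Vtx.g i ∧
    (p = [Vtx.g (i - 1), Vtx.a i, Vtx.b i, Vtx.e i, Vtx.d i, Vtx.g i] ∨
     p = [Vtx.g (i - 1), Vtx.a i, Vtx.c i, Vtx.f i, Vtx.d i, Vtx.g i]) :=
  path_through_variable_component_general n m lit i hi1 hi2 p v hplen hhead hlast hv hchain hint

end PhutballQBF
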